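/- arXiv:2512.12961 — 9 statements merged into one kernel-verified Lean document; each statement's English description precedes it below -/
import Mathlib

section
/- The Kantor double brackets satisfy the super Jacobi identity: the ℤ₂-graded space L(V) = V ⊕ V^s with brackets [L_m, L_n] = det(n;m) L_{m+n}, [L_m, G_n] = det(n;m) G_{m+n} = [G_m, L_n], and [G_m, G_n] = L_{m+n} (with L_0 = 0) is a Lie superalgebra. -/
noncomputable section

/-- Index set for the Kantor double `L(V) = V ⊕ V^s`: `inl m ↔ L_m`, `inr m ↔ G_m`. -/
abbrev LVIdx := (ℤ × ℤ) ⊕ (ℤ × ℤ)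

/-- The Kantor double of the Virasoro-like algebra, as a free ℂ-module. -/
abbrev LV := LVIdx →₀ ℂ

/-- Even basis elements `L_m`, with convention `L_0 = 0`. -/
def Lb (m : ℤ × ℤ) : LV := if m = 0 then 0 else Finsupp.single (Sum.inl m) 1

/-- Odd basis elements `G_m` (only `m ≠ 0` occurs). -/
def Gb (m : ℤ × ℤ) : LV := if m = 0 then 0 else Finsupp.single (Sum.inr m) 1

/-- `det(n;m) = n₁m₂ − n₂m₁`. -/
def dt (n m : ℤ × ℤ) : ℂ := ((n.1 * m.2 - n.2 * m.1 : ℤ) : ℂ)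

/-- Brackets on basis elements: `[L_m,L_n] = det(n;m) L_{m+n}`,
`[L_m,G_n] = det(n;m) G_{m+n} = [G_m,L_n]`, `[G_m,G_n] = L_{m+n}`. -/
def basisBr : LVIdx → LVIdx → LV
  | Sum.inl m, Sum.inl n => dt n m • Lb (m + n)
  | Sum.inl m, Sum.inr n => dt n m • Gb (m + n)
  | Sum.inr m, Sum.inl n => dt n m • Gb (m + n)
  | Sum.inr m, Sum.inr n => Lb (m + n)

/-- The bracket of `L(V)`, extended bilinearly from the basis brackets. -/
def br (x y : LV) : LV :=
  x.sum fun i a => y.sum fun j b => (a * b) • basisBr i j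

/-- `x` is homogeneous of parity `p` (`false` = even, `true` = odd). -/
def IsHomog (x : LV) (p : Bool) : Prop := ∀ i, x i ≠ 0 → i.isRight = p

/-- The Koszul sign `(−1)^{|x||y|}`. -/
def sgn (p q : Bool) : ℂ := if p && q then -1 else 1

end

noncomputable section

def brL : LV →ₗ[ℂ] LV →ₗ[ℂ] LV :=
  Finsupp.lsum ℂ fun i => LinearMap.toSpanSingleton ℂ (LV →ₗ[ℂ] LV)
    (Finsupp.lsum ℂ fun j => LinearMap.toSpanSingleton ℂ LV (basisBr i j))
lemma br_eq (x y : LV) : br x y = brL x y := by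
  simp only [br, brL, Finsupp.lsum_apply, Finsupp.sum, LinearMap.toSpanSingleton_apply,
    LinearMap.sum_apply, LinearMap.smul_apply, Finset.smul_sum, smul_smul]
lemma br_single_single (i j : LVIdx) (a b : ℂ) :
    br (Finsupp.single i a) (Finsupp.single j b) = (a * b) • basisBr i j := by
  simp [br, Finsupp.sum_single_index]

lemma dt_skew (m n : ℤ × ℤ) : dt n m = - dt m n := by
  simp only [dt]; push_cast; ring

lemma dt_zero_left (m : ℤ × ℤ) : dt 0 m = 0 := by simp [dt]
lemma dt_zero_right (n : ℤ × ℤ) : dt n 0 = 0 := by simp [dt]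

lemma dt_eq_zero_of_add (m n : ℤ × ℤ) (h : m + n = 0) : dt n m = 0 := by
  have hn : n = -m := eq_neg_of_add_eq_zero_right h
  subst hn; simp only [dt, Prod.fst_neg, Prod.snd_neg]; push_cast; ring

lemma br_smul_right (x y : LV) (c : ℂ) : br x (c • y) = c • br x y := by
  simp [br_eq]
lemma br_smul_left (x y : LV) (c : ℂ) : br (c • x) y = c • br x y := by
  simp [br_eq]
lemma br_zero_right (x : LV) : br x 0 = 0 := by simp [br_eq]
lemma br_zero_left (y : LV) : br 0 y = 0 := by simp [br_eq]

lemma basisBr_inl_zero_right (i : LVIdx) : basisBr i (Sum.inl 0) = 0 := by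
  cases i <;> simp [basisBr, dt_zero_left]
lemma basisBr_inl_zero_left (k : LVIdx) : basisBr (Sum.inl 0) k = 0 := by
  cases k <;> simp [basisBr, dt_zero_right]

lemma br_single_Lb (i : LVIdx) (p : ℤ × ℤ) :
    br (Finsupp.single i 1) (Lb p) = basisBr i (Sum.inl p) := by
  by_cases hp : p = 0
  · subst hp; simp [Lb, br_zero_right, basisBr_inl_zero_right]
  · rw [Lb, if_neg hp, br_single_single]; simp

lemma br_Lb_single (p : ℤ × ℤ) (k : LVIdx) :
    br (Lb p) (Finsupp.single k 1) = basisBr (Sum.inl p) k := by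
  by_cases hp : p = 0
  · subst hp; simp [Lb, br_zero_left, basisBr_inl_zero_left]
  · rw [Lb, if_neg hp, br_single_single]; simp

lemma br_single_Gb (i : LVIdx) (m n : ℤ × ℤ) :
    br (Finsupp.single i 1) (dt n m • Gb (m + n)) = dt n m • basisBr i (Sum.inr (m + n)) := by
  by_cases h : m + n = 0
  · rw [dt_eq_zero_of_add m n h]; simp [br_zero_right]
  · rw [Gb, if_neg h, br_smul_right, br_single_single]; simp

lemma br_Gb_single (m n : ℤ × ℤ) (k : LVIdx) :
    br (dt n m • Gb (m + n)) (Finsupp.single k 1) = dt n m • basisBr (Sum.inr (m + n)) k := by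
  by_cases h : m + n = 0
  · rw [dt_eq_zero_of_add m n h]; simp [br_zero_left]
  · rw [Gb, if_neg h, br_smul_left, br_single_single]; simp

lemma antisym_basis (i j : LVIdx) :
    basisBr i j = -(sgn i.isRight j.isRight • basisBr j i) := by
  rcases i with m | m <;> rcases j with n | n <;>
    simp only [basisBr, sgn, Sum.isRight_inl, Sum.isRight_inr, Bool.and_self,
      Bool.and_false, Bool.false_and, if_true, if_false, Bool.false_eq_true]
  · rw [add_comm n m, dt_skew n m]; simp
  · rw [add_comm n m, dt_skew n m]; simp
  · rw [add_comm n m, dt_skew n m]; simp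
  · rw [add_comm n m]; simp

lemma smul3 (c d : ℂ) (v : LV) : c • d • v = (c * d) • v := (smul_smul c d v).symm ▸ rfl

lemma jacobi_basis (i j k : LVIdx) :
    br (Finsupp.single i 1) (basisBr j k)
      = br (basisBr i j) (Finsupp.single k 1)
        + sgn i.isRight j.isRight • br (Finsupp.single j 1) (basisBr i k) := by
  rcases i with m | m <;> rcases j with n | n <;> rcases k with k | k <;>
    simp only [basisBr, sgn, Sum.isRight_inl, Sum.isRight_inr, Bool.and_self,
      Bool.and_false, Bool.false_and, if_true, if_false, Bool.false_eq_true, one_smul]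
  · -- LLL
    rw [br_smul_right, br_single_Lb, br_smul_left, br_Lb_single, br_smul_right, br_single_Lb]
    simp only [basisBr, smul_smul]
    rw [show (m+n)+k = m+(n+k) by ring, show n+(m+k) = m+(n+k) by ring, ← add_smul]
    congr 1
    simp only [dt, Prod.fst_add, Prod.snd_add]; push_cast; ring
  · -- LLG
    rw [br_single_Gb, br_smul_left, br_Lb_single, br_single_Gb]
    simp only [basisBr, smul_smul]
    rw [show (m+n)+k = m+(n+k) by ring, show n+(m+k) = m+(n+k) by ring, ← add_smul]
    congr 1
    simp only [dt, Prod.fst_add, Prod.snd_add]; push_cast; ring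
  · -- LGL
    rw [br_single_Gb, br_Gb_single, br_smul_right, br_single_Lb]
    simp only [basisBr, smul_smul]
    rw [show (m+n)+k = m+(n+k) by ring, show n+(m+k) = m+(n+k) by ring, ← add_smul]
    congr 1
    simp only [dt, Prod.fst_add, Prod.snd_add]; push_cast; ring
  · -- LGG
    rw [br_single_Lb, br_Gb_single, br_single_Gb]
    simp only [basisBr, smul_smul, mul_one]
    rw [show (m+n)+k = m+(n+k) by ring, show n+(m+k) = m+(n+k) by ring, ← add_smul]
    congr 1
    simp only [dt, Prod.fst_add, Prod.snd_add]; push_cast; ring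
  · -- GLL
    rw [br_smul_right, br_single_Lb, br_Gb_single, br_single_Gb]
    simp only [basisBr, smul_smul]
    rw [show (m+n)+k = m+(n+k) by ring, show n+(m+k) = m+(n+k) by ring, ← add_smul]
    congr 1
    simp only [dt, Prod.fst_add, Prod.snd_add]; push_cast; ring
  · -- GLG
    rw [br_single_Gb, br_Gb_single, br_single_Lb]
    simp only [basisBr, smul_smul, mul_one]
    rw [show (m+n)+k = m+(n+k) by ring, show n+(m+k) = m+(n+k) by ring, ← add_smul]
    congr 1
    simp only [dt, Prod.fst_add, Prod.snd_add]; push_cast; ring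
  · -- GGL
    rw [br_single_Gb, br_Lb_single, br_single_Gb]
    simp only [basisBr, smul_smul, mul_one, neg_one_mul, neg_smul]
    rw [show (m+n)+k = m+(n+k) by ring, show n+(m+k) = m+(n+k) by ring,
      ← sub_eq_add_neg, ← sub_smul]
    congr 1
    simp only [dt, Prod.fst_add, Prod.snd_add]; push_cast; ring
  · -- GGG
    rw [br_single_Lb, br_Lb_single, br_single_Lb]
    simp only [basisBr, smul_smul, mul_one, neg_one_mul, neg_smul]
    rw [show (m+n)+k = m+(n+k) by ring, show n+(m+k) = m+(n+k) by ring,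
      ← sub_eq_add_neg, ← sub_smul]
    congr 1
    simp only [dt, Prod.fst_add, Prod.snd_add]; push_cast; ring

lemma reduceP {p : Bool} {x : LV} (hx : IsHomog x p) {N : Type} [AddCommGroup N] [Module ℂ N]
    (f g : LV →ₗ[ℂ] N)
    (h : ∀ i, i.isRight = p → f (Finsupp.single i 1) = g (Finsupp.single i 1)) :
    f x = g x := by
  have hx' : x = x.sum fun i a => a • Finsupp.single i 1 := by
    simp [Finsupp.smul_single, Finsupp.sum_single]
  rw [hx', map_finsuppSum f, map_finsuppSum g]
  exact Finsupp.sum_congr fun i hi => by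
    rw [map_smul, map_smul, h i (hx i (Finsupp.mem_support_iff.mp hi))]

lemma reduceA {x : LV} {N : Type} [AddCommGroup N] [Module ℂ N]
    (f g : LV →ₗ[ℂ] N)
    (h : ∀ i, f (Finsupp.single i 1) = g (Finsupp.single i 1)) :
    f x = g x := by
  have hx' : x = x.sum fun i a => a • Finsupp.single i 1 := by
    simp [Finsupp.smul_single, Finsupp.sum_single]
  rw [hx', map_finsuppSum f, map_finsuppSum g]
  exact Finsupp.sum_congr fun i _ => by rw [map_smul, map_smul, h i]

end

/-- the Kantor double brackets make `L(V)` a Lie superalgebra: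
super antisymmetry and the super Jacobi identity hold. -/
theorem stmt2 :
    (∀ (px py : Bool) (x y : LV), IsHomog x px → IsHomog y py →
      br x y = -(sgn px py • br y x)) ∧
    (∀ (px py : Bool) (x y z : LV), IsHomog x px → IsHomog y py →
      br x (br y z) = br (br x y) z + sgn px py • br y (br x z)) := by
  constructor
  · intro px py x y hx hy
    have hA : ∀ j : LVIdx, j.isRight = py →
        br x (Finsupp.single j 1) = -(sgn px py • br (Finsupp.single j 1) x) := by
      intro j hj
      have h := reduceP hx (brL.flip (Finsupp.single j 1))
        (-(sgn px py • brL (Finsupp.single j 1)))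
        (fun i hi => by
          simp only [LinearMap.flip_apply, LinearMap.neg_apply, LinearMap.smul_apply, ← br_eq]
          rw [br_single_single, br_single_single]
          simp only [one_mul, one_smul]
          rw [← hi, ← hj]
          exact antisym_basis i j)
      simpa only [LinearMap.flip_apply, LinearMap.neg_apply, LinearMap.smul_apply, ← br_eq]
        using h
    have h := reduceP hy (brL x) (-(sgn px py • brL.flip x))
      (fun j hj => by
        simp only [LinearMap.flip_apply, LinearMap.neg_apply, LinearMap.smul_apply, ← br_eq]
        exact hA j hj)
    simpa only [LinearMap.flip_apply, LinearMap.neg_apply, LinearMap.smul_apply, ← br_eq]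
      using h
  · intro px py x y z hx hy
    have key : ∀ i j k : LVIdx, i.isRight = px → j.isRight = py →
        br (Finsupp.single i 1) (br (Finsupp.single j 1) (Finsupp.single k 1))
          = br (br (Finsupp.single i 1) (Finsupp.single j 1)) (Finsupp.single k 1)
            + sgn px py • br (Finsupp.single j 1) (br (Finsupp.single i 1) (Finsupp.single k 1)) := by
      intro i j k hi hj
      rw [br_single_single j k, br_single_single i j, br_single_single i k]
      simp only [one_mul, one_smul]
      rw [← hi, ← hj]
      exact jacobi_basis i j k
    have hA : ∀ i j : LVIdx, i.isRight = px → j.isRight = py →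
        br (Finsupp.single i 1) (br (Finsupp.single j 1) z)
          = br (br (Finsupp.single i 1) (Finsupp.single j 1)) z
            + sgn px py • br (Finsupp.single j 1) (br (Finsupp.single i 1) z) := by
      intro i j hi hj
      have h := reduceA (x := z) ((brL (Finsupp.single i 1)).comp (brL (Finsupp.single j 1)))
        (brL (brL (Finsupp.single i 1) (Finsupp.single j 1))
          + sgn px py • (brL (Finsupp.single j 1)).comp (brL (Finsupp.single i 1)))
        (fun k => by
          simp only [LinearMap.comp_apply, LinearMap.add_apply, LinearMap.smul_apply, ← br_eq]
          exact key i j k hi hj)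
      simpa only [LinearMap.comp_apply, LinearMap.add_apply, LinearMap.smul_apply, ← br_eq]
        using h
    have hB : ∀ i : LVIdx, i.isRight = px →
        br (Finsupp.single i 1) (br y z)
          = br (br (Finsupp.single i 1) y) z
            + sgn px py • br y (br (Finsupp.single i 1) z) := by
      intro i hi
      have h := reduceP hy ((brL (Finsupp.single i 1)).comp (brL.flip z))
        ((brL.flip z).comp (brL (Finsupp.single i 1))
          + sgn px py • brL.flip (brL (Finsupp.single i 1) z))
        (fun j hj => by
          simp only [LinearMap.comp_apply, LinearMap.add_apply, LinearMap.smul_apply,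
            LinearMap.flip_apply, ← br_eq]
          exact hA i j hi hj)
      simpa only [LinearMap.comp_apply, LinearMap.add_apply, LinearMap.smul_apply,
        LinearMap.flip_apply, ← br_eq] using h
    have h := reduceP hx (brL.flip (brL y z))
      ((brL.flip z).comp (brL.flip y) + sgn px py • (brL y).comp (brL.flip z))
      (fun i hi => by
        simp only [LinearMap.comp_apply, LinearMap.add_apply, LinearMap.smul_apply,
          LinearMap.flip_apply, ← br_eq]
        exact hB i hi)
    simpa only [LinearMap.comp_apply, LinearMap.add_apply, LinearMap.smul_apply,
      LinearMap.flip_apply, ← br_eq] using h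
end

section
/- Suppose a : ℤ² \ {0} → ℂ satisfies 2·det(n;m)·a(m+n) = det(n;m)·a(m) + det(n;m)·a(n) for all m, n with m+n ≠ 0 (where det(n;m) = n₁m₂ - n₂m₁). Then a is constant. -/
/-- If `a : ℤ² \ {0} → ℂ` satisfies
`2·det(n;m)·a(m+n) = det(n;m)·a(m) + det(n;m)·a(n)` for all nonzero `m, n` with `m+n ≠ 0`,
where `det(n;m) = n₁m₂ − n₂m₁`, then `a` is constant (on nonzero arguments). -/
theorem stmt4 (a : ℤ × ℤ → ℂ)
    (h : ∀ m n : ℤ × ℤ, m ≠ 0 → n ≠ 0 → m + n ≠ 0 →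
      2 * ((n.1 * m.2 - n.2 * m.1 : ℤ) : ℂ) * a (m + n) =
        ((n.1 * m.2 - n.2 * m.1 : ℤ) : ℂ) * a m + ((n.1 * m.2 - n.2 * m.1 : ℤ) : ℂ) * a n) :
    ∀ m n : ℤ × ℤ, m ≠ 0 → n ≠ 0 → a m = a n := by
  have mid : ∀ m n : ℤ × ℤ, (n.1 * m.2 - n.2 * m.1 : ℤ) ≠ 0 →
      2 * a (m + n) = a m + a n := by
    intro m n hd
    have hm : m ≠ 0 := by rintro rfl; simp at hd
    have hn : n ≠ 0 := by rintro rfl; simp at hd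
    have hmn : m + n ≠ 0 := by
      intro hmn
      apply hd
      have h1 : m.1 + n.1 = 0 := congrArg Prod.fst hmn
      have h2 : m.2 + n.2 = 0 := congrArg Prod.snd hmn
      linear_combination m.2 * h1 - m.1 * h2
    have hdC : ((n.1 * m.2 - n.2 * m.1 : ℤ) : ℂ) ≠ 0 := Int.cast_ne_zero.mpr hd
    have heq := h m n hm hn hmn
    apply mul_left_cancel₀ hdC
    linear_combination heq
  have key : ∀ m n n' : ℤ × ℤ, (n.1 * m.2 - n.2 * m.1 : ℤ) ≠ 0 →
      (n'.1 * m.2 - n'.2 * m.1 : ℤ) ≠ 0 → a n = a n' := by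
    intro m n n' hd hd'
    have e1 := mid m n hd
    have e1' := mid m n' hd'
    have e2 : 2 * a (m + (m + n)) = a m + a (m + n) := by
      apply mid
      have : ((m + n).1 * m.2 - (m + n).2 * m.1 : ℤ) = n.1 * m.2 - n.2 * m.1 := by
        simp only [Prod.fst_add, Prod.snd_add]; ring
      rw [this]; exact hd
    have e2' : 2 * a (m + (m + n')) = a m + a (m + n') := by
      apply mid
      have : ((m + n').1 * m.2 - (m + n').2 * m.1 : ℤ) = n'.1 * m.2 - n'.2 * m.1 := by
        simp only [Prod.fst_add, Prod.snd_add]; ring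
      rw [this]; exact hd'
    have e3 : 2 * a (m + m + n) = a (m + m) + a n := by
      apply mid
      have : (n.1 * (m + m).2 - n.2 * (m + m).1 : ℤ) = 2 * (n.1 * m.2 - n.2 * m.1) := by
        simp only [Prod.fst_add, Prod.snd_add]; ring
      rw [this]
      exact mul_ne_zero two_ne_zero hd
    have e3' : 2 * a (m + m + n') = a (m + m) + a n' := by
      apply mid
      have : (n'.1 * (m + m).2 - n'.2 * (m + m).1 : ℤ) = 2 * (n'.1 * m.2 - n'.2 * m.1) := by
        simp only [Prod.fst_add, Prod.snd_add]; ring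
      rw [this]
      exact mul_ne_zero two_ne_zero hd'
    rw [← add_assoc] at e2 e2'
    linear_combination e1 + 2 * e2 - 2 * e3 - e1' - 2 * e2' + 2 * e3'
  intro m n hm hn
  have hm1 : m.1 ≠ 0 ∨ m.2 ≠ 0 := by
    by_contra hc
    push_neg at hc
    exact hm (Prod.ext hc.1 hc.2)
  have hn1 : n.1 ≠ 0 ∨ n.2 ≠ 0 := by
    by_contra hc
    push_neg at hc
    exact hn (Prod.ext hc.1 hc.2)
  have hmsq : m.1 * m.1 + m.2 * m.2 ≠ 0 := by
    rcases hm1 with h1 | h1 <;> nlinarith [mul_self_nonneg m.1, mul_self_nonneg m.2,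
      mul_self_pos.mpr h1]
  by_cases hdep : (n.1 * m.2 - n.2 * m.1 : ℤ) = 0
  · -- n is parallel to m; use p = (-m.2, m.1)
    set p : ℤ × ℤ := (-m.2, m.1) with hp
    have hdm : (m.1 * p.2 - m.2 * p.1 : ℤ) ≠ 0 := by
      simp only [hp]
      have : (m.1 * m.1 - m.2 * -m.2 : ℤ) = m.1 * m.1 + m.2 * m.2 := by ring
      rw [this]; exact hmsq
    have hdn : (n.1 * p.2 - n.2 * p.1 : ℤ) ≠ 0 := by
      simp only [hp]
      intro h0
      have hzero : (n.1 * m.1 + n.2 * m.2 : ℤ) = 0 := by linear_combination h0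
      have hn1' : n.1 * (m.1 * m.1 + m.2 * m.2) = 0 := by linear_combination m.1 * hzero + m.2 * hdep
      have hn2' : n.2 * (m.1 * m.1 + m.2 * m.2) = 0 := by linear_combination m.2 * hzero - m.1 * hdep
      have hn1z : n.1 = 0 := by
        rcases mul_eq_zero.mp hn1' with h' | h'
        · exact h'
        · exact absurd h' hmsq
      have hn2z : n.2 = 0 := by
        rcases mul_eq_zero.mp hn2' with h' | h'
        · exact h'
        · exact absurd h' hmsq
      exact hn (Prod.ext hn1z hn2z)
    exact key p m n hdm hdn
  · -- independent; use base m + n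
    apply key (m + n) m n
    · have : (m.1 * (m + n).2 - m.2 * (m + n).1 : ℤ) = -(n.1 * m.2 - n.2 * m.1) := by
        simp only [Prod.fst_add, Prod.snd_add]; ring
      rw [this]
      exact neg_ne_zero.mpr hdep
    · have : (n.1 * (m + n).2 - n.2 * (m + n).1 : ℤ) = n.1 * m.2 - n.2 * m.1 := by
        simp only [Prod.fst_add, Prod.snd_add]; ring
      rw [this]
      exact hdep
end

section
/- Fix i = (0, i₂) with i₂ ∈ ℤ \ {0}. Suppose a : ℤ² \ {0} → ℂ satisfies 2·det(n;m)·a(m+n) = ((m₂+i₂)n₁ − m₁n₂)·a(m) + (m₂n₁ − m₁(n₂+i₂))·a(n) for all nonzero m, n with m+n ≠ 0. Then a ≡ 0. -/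
/-- degree-`i` coefficient equation, `i = (0, i₂)` with `i₂ ≠ 0`.
If `a : ℤ² \ {0} → ℂ` satisfies
`2·det(n;m)·a(m+n) = ((m₂+i₂)n₁ − m₁n₂)·a(m) + (m₂n₁ − m₁(n₂+i₂))·a(n)`
for all nonzero `m, n` with `m+n ≠ 0`, then `a ≡ 0`. -/
theorem stmt6 (i₂ : ℤ) (hi : i₂ ≠ 0) (a : ℤ × ℤ → ℂ)
    (h : ∀ m n : ℤ × ℤ, m ≠ 0 → n ≠ 0 → m + n ≠ 0 →
      2 * ((n.1 * m.2 - n.2 * m.1 : ℤ) : ℂ) * a (m + n) =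
        (((m.2 + i₂) * n.1 - m.1 * n.2 : ℤ) : ℂ) * a m +
        ((m.2 * n.1 - m.1 * (n.2 + i₂) : ℤ) : ℂ) * a n) :
    ∀ m : ℤ × ℤ, m ≠ 0 → a m = 0 := by
  have hi' : (i₂ : ℂ) ≠ 0 := Int.cast_ne_zero.mpr hi
  -- doubling: a(2m) = 2 a(m) for m off the y-axis
  have hdouble : ∀ p q : ℤ, p ≠ 0 → a (2*p, 2*q) = 2 * a (p, q) := by
    intro p q hp
    have hp' : (p : ℂ) ≠ 0 := Int.cast_ne_zero.mpr hp
    have h1 := h (p, q) (2*p, 2*q) (by simp [Prod.ext_iff]; omega)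
      (by simp [Prod.ext_iff]; omega) (by simp [Prod.ext_iff]; omega)
    push_cast at h1
    have h2 : (i₂ : ℂ) * p * a (2*p, 2*q) = (i₂ : ℂ) * p * (2 * a (p, q)) := by
      linear_combination h1
    exact mul_left_cancel₀ (mul_ne_zero hi' hp') h2
  -- shift: a(p, q+i₂) = 2 a(p, q) for p ≠ 0
  have hshift : ∀ p q : ℤ, p ≠ 0 → a (p, q + i₂) = 2 * a (p, q) := by
    intro p q hp
    have hp' : (p : ℂ) ≠ 0 := Int.cast_ne_zero.mpr hp
    have h1 := h (0, -i₂) (p, q + i₂) (by simp [Prod.ext_iff]; omega)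
      (by simp [Prod.ext_iff]; omega) (by simp [Prod.ext_iff]; omega)
    have hsum : ((0, -i₂) + (p, q + i₂) : ℤ × ℤ) = (p, q) := by
      simp [Prod.ext_iff]
    rw [hsum] at h1
    push_cast at h1
    have h2 : (i₂ : ℂ) * p * a (p, q + i₂) = (i₂ : ℂ) * p * (2 * a (p, q)) := by
      linear_combination h1
    exact mul_left_cancel₀ (mul_ne_zero hi' hp') h2
  -- off-axis vanishing
  have hoff : ∀ p q : ℤ, p ≠ 0 → a (p, q) = 0 := by
    intro p q hp
    have h2p : (2*p : ℤ) ≠ 0 := by omega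
    have e1 := hshift (2*p) (2*q) h2p
    have e2 := hshift (2*p) (2*q + i₂) h2p
    have e3 := hshift p q hp
    have e4 := hdouble p (q + i₂) hp
    have key : (2*(q+i₂) : ℤ) = (2*q + i₂) + i₂ := by ring
    rw [key] at e4
    linear_combination (-1/2 : ℂ)*e1 + (-1/4 : ℂ)*e2 + (1/2 : ℂ)*e3
      + (1/4 : ℂ)*e4 - hdouble p q hp
  -- conclusion
  intro m hm
  obtain ⟨p, q⟩ := m
  by_cases hp : p = 0
  · subst hp
    have hq : q ≠ 0 := by simpa [Prod.ext_iff] using hm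
    have hq' : (q : ℂ) ≠ 0 := Int.cast_ne_zero.mpr hq
    have h1 := h (1, 0) (-1, q) (by simp [Prod.ext_iff]) (by simp [Prod.ext_iff])
      (by simp [Prod.ext_iff]; omega)
    have hsum : ((1, 0) + (-1, q) : ℤ × ℤ) = ((0 : ℤ), q) := by
      simp [Prod.ext_iff]
    rw [hsum, hoff 1 0 one_ne_zero, hoff (-1) q (by omega)] at h1
    push_cast at h1
    have h2 : (q : ℂ) * a (0, q) = (q : ℂ) * 0 := by linear_combination -h1/2
    exact mul_left_cancel₀ hq' h2
  · exact hoff p q hp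
end

section
/- Fix i = (i₁, i₂) with i₁ ≠ 0 and i₂ ≠ 0. Suppose a : ℤ² \ {0} → ℂ satisfies 2·det(n;m)·a(m+n) = det(n; m+i)·a(m) + det(n+i; m)·a(n) for all nonzero m, n with m+n ≠ 0, where det(p;q) = p₁q₂ − p₂q₁. Then a ≡ 0. -/
/-- degree-`i` coefficient equation with `i = (i₁,i₂)`, `i₁ ≠ 0 ≠ i₂`.
With `det(p;q) = p₁q₂ − p₂q₁`, if `a : ℤ² \ {0} → ℂ` satisfies
`2·det(n;m)·a(m+n) = det(n;m+i)·a(m) + det(n+i;m)·a(n)` for all nonzero `m, n` with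
`m+n ≠ 0`, then `a ≡ 0`. -/
theorem stmt7 (i : ℤ × ℤ) (hi1 : i.1 ≠ 0) (hi2 : i.2 ≠ 0) (a : ℤ × ℤ → ℂ)
    (h : ∀ m n : ℤ × ℤ, m ≠ 0 → n ≠ 0 → m + n ≠ 0 →
      2 * ((n.1 * m.2 - n.2 * m.1 : ℤ) : ℂ) * a (m + n) =
        ((n.1 * (m + i).2 - n.2 * (m + i).1 : ℤ) : ℂ) * a m +
        (((n + i).1 * m.2 - (n + i).2 * m.1 : ℤ) : ℂ) * a n) :
    ∀ m : ℤ × ℤ, m ≠ 0 → a m = 0 := by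
  have hsq : 0 < i.1 ^ 2 + i.2 ^ 2 := by
    rcases lt_or_gt_of_ne hi1 with h1 | h1 <;> nlinarith [sq_nonneg i.2]
  have hne : ∀ x : ℤ × ℤ, i.1 * x.2 - i.2 * x.1 ≠ 0 → x ≠ 0 := by
    rintro x hx rfl; simp at hx
  -- doubling lemma
  have dbl : ∀ x : ℤ × ℤ, i.1 * x.2 - i.2 * x.1 ≠ 0 → a (x + x) = 2 * a x := by
    intro x hx
    have e2 : i.1 * (x + x).2 - i.2 * (x + x).1 = 2 * (i.1 * x.2 - i.2 * x.1) := by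
      simp only [Prod.fst_add, Prod.snd_add]; ring
    have e3 : i.1 * (x + (x + x)).2 - i.2 * (x + (x + x)).1
        = 3 * (i.1 * x.2 - i.2 * x.1) := by
      simp only [Prod.fst_add, Prod.snd_add]; ring
    have H := h x (x + x) (hne x hx)
      (hne _ (by rw [e2]; exact mul_ne_zero (by norm_num) hx))
      (hne _ (by rw [e3]; exact mul_ne_zero (by norm_num) hx))
    have hLc : ((i.1 : ℂ) * x.2 - (i.2 : ℂ) * x.1) ≠ 0 := by
      have h0 : ((i.1 * x.2 - i.2 * x.1 : ℤ) : ℂ) ≠ 0 := Int.cast_ne_zero.mpr hx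
      push_cast at h0; exact h0
    push_cast [Prod.fst_add, Prod.snd_add] at H
    have key : ((i.1 : ℂ) * x.2 - (i.2 : ℂ) * x.1) * a (x + x)
        = ((i.1 : ℂ) * x.2 - (i.2 : ℂ) * x.1) * (2 * a x) := by
      linear_combination -H
    exact mul_left_cancel₀ hLc key
  -- main step: the pair (m, k•m+i)
  have B : ∀ (k : ℤ) (m : ℤ × ℤ), 1 ≤ k → i.1 * m.2 - i.2 * m.1 ≠ 0 →
      a (k • m + i) = (k : ℂ) * a m ∧
      2 * a (m + (k • m + i)) = ((k : ℂ) + 1) * a m := by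
    intro k m hk hm
    have hk0 : k ≠ 0 := by omega
    have Ln : i.1 * (k • m + i).2 - i.2 * (k • m + i).1
        = k * (i.1 * m.2 - i.2 * m.1) := by
      simp only [Prod.fst_add, Prod.snd_add, Prod.smul_fst, Prod.smul_snd, smul_eq_mul]; ring
    have Lmn : i.1 * (m + (k • m + i)).2 - i.2 * (m + (k • m + i)).1
        = (k + 1) * (i.1 * m.2 - i.2 * m.1) := by
      simp only [Prod.fst_add, Prod.snd_add, Prod.smul_fst, Prod.smul_snd, smul_eq_mul]; ring
    have Lm2 : i.1 * (m + m).2 - i.2 * (m + m).1 = 2 * (i.1 * m.2 - i.2 * m.1) := by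
      simp only [Prod.fst_add, Prod.snd_add]; ring
    have Ln2 : i.1 * ((k • m + i) + (k • m + i)).2 - i.2 * ((k • m + i) + (k • m + i)).1
        = (2 * k) * (i.1 * m.2 - i.2 * m.1) := by
      simp only [Prod.fst_add, Prod.snd_add, Prod.smul_fst, Prod.smul_snd, smul_eq_mul]; ring
    have Lall : i.1 * (m + m + ((k • m + i) + (k • m + i))).2
        - i.2 * (m + m + ((k • m + i) + (k • m + i))).1
        = (2 * k + 2) * (i.1 * m.2 - i.2 * m.1) := by
      simp only [Prod.fst_add, Prod.snd_add, Prod.smul_fst, Prod.smul_snd, smul_eq_mul]; ring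
    have hnL : i.1 * (k • m + i).2 - i.2 * (k • m + i).1 ≠ 0 := by
      rw [Ln]; exact mul_ne_zero hk0 hm
    have hmnL : i.1 * (m + (k • m + i)).2 - i.2 * (m + (k • m + i)).1 ≠ 0 := by
      rw [Lmn]; exact mul_ne_zero (by omega) hm
    have H4 := h m (k • m + i) (hne m hm) (hne _ hnL) (hne _ hmnL)
    have H5 := h (m + m) ((k • m + i) + (k • m + i))
      (hne _ (by rw [Lm2]; exact mul_ne_zero (by norm_num) hm))
      (hne _ (by rw [Ln2]; exact mul_ne_zero (by omega) hm))
      (hne _ (by rw [Lall]; exact mul_ne_zero (by omega) hm))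
    rw [show m + m + ((k • m + i) + (k • m + i)) = (m + (k • m + i)) + (m + (k • m + i)) by
      abel] at H5
    rw [dbl m hm, dbl (k • m + i) hnL, dbl (m + (k • m + i)) hmnL] at H5
    push_cast [Prod.fst_add, Prod.snd_add, Prod.smul_fst, Prod.smul_snd, smul_eq_mul] at H4 H5
    have hLc : ((i.1 : ℂ) * m.2 - (i.2 : ℂ) * m.1) ≠ 0 := by
      have h0 : ((i.1 * m.2 - i.2 * m.1 : ℤ) : ℂ) ≠ 0 := Int.cast_ne_zero.mpr hm
      push_cast at h0; exact h0
    have h4L : (4 : ℂ) * ((i.1 : ℂ) * m.2 - (i.2 : ℂ) * m.1) ≠ 0 :=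
      mul_ne_zero (by norm_num) hLc
    have h2L : (2 : ℂ) * ((i.1 : ℂ) * m.2 - (i.2 : ℂ) * m.1) ≠ 0 :=
      mul_ne_zero (by norm_num) hLc
    have g1 : a (k • m + i) = (k : ℂ) * a m := by
      have key : (4 : ℂ) * ((i.1 : ℂ) * m.2 - (i.2 : ℂ) * m.1) * a (k • m + i)
          = (4 : ℂ) * ((i.1 : ℂ) * m.2 - (i.2 : ℂ) * m.1) * ((k : ℂ) * a m) := by
        linear_combination H5 - 8 * H4
      exact mul_left_cancel₀ h4L key
    refine ⟨g1, ?_⟩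
    have key : (2 : ℂ) * ((i.1 : ℂ) * m.2 - (i.2 : ℂ) * m.1) * (2 * a (m + (k • m + i)))
        = (2 : ℂ) * ((i.1 : ℂ) * m.2 - (i.2 : ℂ) * m.1) * (((k : ℂ) + 1) * a m) := by
      linear_combination 2 * H4 + (4 * ((i.1 : ℂ) * m.2 - (i.2 : ℂ) * m.1)) * g1
    exact mul_left_cancel₀ h2L key
  -- a vanishes off the i-line
  have main1 : ∀ m : ℤ × ℤ, i.1 * m.2 - i.2 * m.1 ≠ 0 → a m = 0 := by
    intro m hm
    obtain ⟨g1, g2⟩ := B 1 m le_rfl hm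
    obtain ⟨g3, -⟩ := B 2 m one_le_two hm
    rw [show m + ((1 : ℤ) • m + i) = (2 : ℤ) • m + i by
      rw [two_smul, one_smul]; abel] at g2
    linear_combination (1 / 2 : ℂ) * g2 - g3
  -- finish
  intro m hm0
  by_cases hL : i.1 * m.2 - i.2 * m.1 = 0
  · by_cases hmi : m + i = 0
    · -- m = -i
      have hm12 : m.1 = -i.1 ∧ m.2 = -i.2 := by
        rw [Prod.ext_iff] at hmi
        simp only [Prod.fst_add, Prod.snd_add, Prod.fst_zero, Prod.snd_zero] at hmi
        omega
      have hmeq : ((i.2, -i.1) : ℤ × ℤ) + (-i.1 - i.2, i.1 - i.2) = m := by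
        obtain ⟨h1, h2⟩ := hm12
        rw [Prod.ext_iff]
        constructor
        · show i.2 + (-i.1 - i.2) = m.1; omega
        · show -i.1 + (i.1 - i.2) = m.2; omega
      have hm'L : i.1 * ((i.2, -i.1) : ℤ × ℤ).2 - i.2 * ((i.2, -i.1) : ℤ × ℤ).1 ≠ 0 := by
        show i.1 * (-i.1) - i.2 * i.2 ≠ 0
        intro hcon; nlinarith [hsq]
      have hn'L : i.1 * ((-i.1 - i.2, i.1 - i.2) : ℤ × ℤ).2
          - i.2 * ((-i.1 - i.2, i.1 - i.2) : ℤ × ℤ).1 ≠ 0 := by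
        show i.1 * (i.1 - i.2) - i.2 * (-i.1 - i.2) ≠ 0
        intro hcon; nlinarith [hsq]
      have H := h (i.2, -i.1) (-i.1 - i.2, i.1 - i.2) (hne _ hm'L) (hne _ hn'L)
        (by rw [hmeq]; exact hm0)
      rw [hmeq] at H
      rw [main1 _ hm'L, main1 _ hn'L] at H
      push_cast [Prod.fst_add, Prod.snd_add] at H
      have hc : ((i.1 : ℂ) ^ 2 + (i.2 : ℂ) ^ 2) ≠ 0 := by
        have h0 : ((i.1 ^ 2 + i.2 ^ 2 : ℤ) : ℂ) ≠ 0 := Int.cast_ne_zero.mpr (by omega)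
        push_cast at h0; exact h0
      have key : (2 : ℂ) * ((i.1 : ℂ) ^ 2 + (i.2 : ℂ) ^ 2) * a m
          = (2 : ℂ) * ((i.1 : ℂ) ^ 2 + (i.2 : ℂ) ^ 2) * 0 := by
        linear_combination H
      exact mul_left_cancel₀ (mul_ne_zero (by norm_num) hc) key
    · -- m parallel to i, m + i ≠ 0
      have hnL : i.1 * ((i.2, -i.1) : ℤ × ℤ).2 - i.2 * ((i.2, -i.1) : ℤ × ℤ).1 ≠ 0 := by
        show i.1 * (-i.1) - i.2 * i.2 ≠ 0
        intro hcon; nlinarith [hsq]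
      have hmnL : i.1 * (m + (i.2, -i.1)).2 - i.2 * (m + (i.2, -i.1)).1 ≠ 0 := by
        have e : i.1 * (m + (i.2, -i.1)).2 - i.2 * (m + (i.2, -i.1)).1
            = (i.1 * m.2 - i.2 * m.1) - (i.1 ^ 2 + i.2 ^ 2) := by
          simp only [Prod.fst_add, Prod.snd_add]
          show i.1 * (m.2 + -i.1) - i.2 * (m.1 + i.2) = _
          ring
        rw [e, hL]; omega
      have H := h m (i.2, -i.1) hm0 (hne _ hnL) (hne _ hmnL)
      rw [main1 _ hnL, main1 _ hmnL] at H
      -- coefficient of `a m` is nonzero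
      have hc2 : i.2 * (m.2 + i.2) + i.1 * (m.1 + i.1) ≠ 0 := by
        intro hcon
        have e1 : i.1 * (m.2 + i.2) - i.2 * (m.1 + i.1) = 0 := by linear_combination hL
        have h3 : (i.1 ^ 2 + i.2 ^ 2) * (m.1 + i.1) = 0 := by
          linear_combination i.1 * hcon - i.2 * e1
        have h4 : (i.1 ^ 2 + i.2 ^ 2) * (m.2 + i.2) = 0 := by
          linear_combination i.2 * hcon + i.1 * e1
        have hw1 : m.1 + i.1 = 0 := by
          rcases mul_eq_zero.mp h3 with h' | h'
          · omega
          · exact h'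
        have hw2 : m.2 + i.2 = 0 := by
          rcases mul_eq_zero.mp h4 with h' | h'
          · omega
          · exact h'
        apply hmi
        rw [Prod.ext_iff]
        simp only [Prod.fst_add, Prod.snd_add, Prod.fst_zero, Prod.snd_zero]
        exact ⟨hw1, hw2⟩
      have hc2c : ((i.2 * (m.2 + i.2) + i.1 * (m.1 + i.1) : ℤ) : ℂ) ≠ 0 :=
        Int.cast_ne_zero.mpr hc2
      push_cast [Prod.fst_add, Prod.snd_add] at H
      push_cast at hc2c
      have key : ((i.2 : ℂ) * ((m.2 : ℂ) + i.2) + (i.1 : ℂ) * ((m.1 : ℂ) + i.1)) * a m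
          = ((i.2 : ℂ) * ((m.2 : ℂ) + i.2) + (i.1 : ℂ) * ((m.1 : ℂ) + i.1)) * 0 := by
        linear_combination -H
      exact mul_left_cancel₀ hc2c key
  · exact main1 m hL
end

section
/- Fix i = (0, i₂), i₂ ≠ 0. Suppose b : ℤ² \ {0} → ℂ satisfies both 2·det(n;m)·b(m+n) = (m₂n₁ − m₁(n₂+i₂))·b(n) and (m₂n₁ − m₁(n₂+i₂))·b(n) = ((m₂+i₂)n₁ − m₁n₂)·b(m) for all nonzero m, n with m+n ≠ 0. Then b ≡ 0. -/
/-- odd coefficient equations for degree `i = (0,i₂)`, `i₂ ≠ 0`.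
If `b : ℤ² \ {0} → ℂ` satisfies both
`2·det(n;m)·b(m+n) = (m₂n₁ − m₁(n₂+i₂))·b(n)` and
`(m₂n₁ − m₁(n₂+i₂))·b(n) = ((m₂+i₂)n₁ − m₁n₂)·b(m)`
for all nonzero `m, n` with `m+n ≠ 0`, then `b ≡ 0`. -/
theorem stmt8 (i₂ : ℤ) (hi : i₂ ≠ 0) (b : ℤ × ℤ → ℂ)
    (h1 : ∀ m n : ℤ × ℤ, m ≠ 0 → n ≠ 0 → m + n ≠ 0 →
      2 * ((n.1 * m.2 - n.2 * m.1 : ℤ) : ℂ) * b (m + n) =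
        ((m.2 * n.1 - m.1 * (n.2 + i₂) : ℤ) : ℂ) * b n)
    (h2 : ∀ m n : ℤ × ℤ, m ≠ 0 → n ≠ 0 → m + n ≠ 0 →
      ((m.2 * n.1 - m.1 * (n.2 + i₂) : ℤ) : ℂ) * b n =
        (((m.2 + i₂) * n.1 - m.1 * n.2 : ℤ) : ℂ) * b m) :
    ∀ m : ℤ × ℤ, m ≠ 0 → b m = 0 := by
  have hiC : (i₂ : ℂ) ≠ 0 := Int.cast_ne_zero.mpr hi
  -- Step 1: b m = 0 whenever m.1 ≠ 0
  have key : ∀ m : ℤ × ℤ, m ≠ 0 → m.1 ≠ 0 → b m = 0 := by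
    intro m hm hm1
    have hmm : m + m ≠ 0 := by
      intro h
      apply hm
      obtain ⟨a, c⟩ := m
      simp [Prod.ext_iff] at h ⊢
      omega
    have h := h2 m m hm hm hmm
    have h' : (2 : ℂ) * (m.1 : ℂ) * (i₂ : ℂ) * b m = 0 := by
      push_cast at h ⊢
      linear_combination -h
    have hm1C : (m.1 : ℂ) ≠ 0 := Int.cast_ne_zero.mpr hm1
    have hne : (2 : ℂ) * (m.1 : ℂ) * (i₂ : ℂ) ≠ 0 :=
      mul_ne_zero (mul_ne_zero two_ne_zero hm1C) hiC
    exact (mul_eq_zero.mp h').resolve_left hne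
  intro m hm
  by_cases hm1 : m.1 ≠ 0
  · exact key m hm hm1
  push_neg at hm1
  obtain ⟨a, c⟩ := m
  simp only at hm1
  subst hm1
  have hc : c ≠ 0 := by
    intro h; apply hm; simp [h, Prod.ext_iff]
  by_cases hci : c + i₂ ≠ 0
  · -- use h2 with m = (0,c), n = (1,0)
    have hn : ((1, 0) : ℤ × ℤ) ≠ 0 := by simp [Prod.ext_iff]
    have hsum : ((0, c) : ℤ × ℤ) + (1, 0) ≠ 0 := by simp [Prod.ext_iff]
    have h := h2 (0, c) (1, 0) hm hn hsum
    have hb : b (1, 0) = 0 := key (1, 0) hn (by norm_num)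
    simp only [hb, mul_zero] at h
    have hcoef : (((c + i₂) * 1 - 0 * 0 : ℤ) : ℂ) ≠ 0 := by
      simp only [mul_one, zero_mul, sub_zero]
      exact_mod_cast Int.cast_ne_zero.mpr hci
    rcases mul_eq_zero.mp h.symm with h' | h'
    · exact absurd h' hcoef
    · exact h'
  · push_neg at hci
    have hc' : c = -i₂ := by omega
    subst hc'
    -- use h1 with m = (1,0), n = (-1,-i₂), m+n = (0,-i₂)
    have hm' : ((1, 0) : ℤ × ℤ) ≠ 0 := by simp [Prod.ext_iff]
    have hn' : ((-1, -i₂) : ℤ × ℤ) ≠ 0 := by simp [Prod.ext_iff]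
    have hsum : ((1, 0) : ℤ × ℤ) + (-1, -i₂) ≠ 0 := by
      simp [Prod.ext_iff]; omega
    have h := h1 (1, 0) (-1, -i₂) hm' hn' hsum
    have hb : b (-1, -i₂) = 0 := key (-1, -i₂) hn' (by norm_num)
    simp only [hb, mul_zero] at h
    have hsum_eq : ((1, 0) : ℤ × ℤ) + (-1, -i₂) = (0, -i₂) := by
      simp [Prod.ext_iff]
    rw [hsum_eq] at h
    have : (2 : ℂ) * (i₂ : ℂ) * b (0, -i₂) = 0 := by
      push_cast at h ⊢
      linear_combination h
    rcases mul_eq_zero.mp this with h' | h'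
    · rcases mul_eq_zero.mp h' with h'' | h''
      · norm_num at h''
      · exact absurd h'' hiC
    · exact h'
end

section
/- Fix i = (i₁, i₂) with i₁, i₂ ∈ ℤ \ {0}. Suppose b : ℤ² \ {0} → ℂ satisfies 2·det(n;m)·b(m+n) = det(n+i; m)·b(n) and det(n+i; m)·b(n) = det(n; m+i)·b(m) for all nonzero m, n with m+n ≠ 0, where det(p;q) = p₁q₂ − p₂q₁. Then b ≡ 0. -/
/-!
Taking `m = n` in the first equation gives `det(i;n)·b(n) = 0`, so `b` vanishes off the line
`ℚ·i`. Given a nonzero `m`, choose `n` off that line with `det(n;m) ≠ 0`; the first equation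
for the pair `(m - n, n)` then reads `2·det(n;m)·b(m) = det(n+i; m-n)·b(n) = 0`.
-/

namespace KantorDouble

def det (p q : ℤ × ℤ) : ℤ := p.1 * q.2 - p.2 * q.1

lemma det_self (p : ℤ × ℤ) : det p p = 0 := by
  simp only [det]; ring

lemma det_add_left (p q r : ℤ × ℤ) : det (p + q) r = det p r + det q r := by
  simp only [det, Prod.fst_add, Prod.snd_add]; ring

lemma det_sub_right (p q r : ℤ × ℤ) : det p (q - r) = det p q - det p r := by
  simp only [det, Prod.fst_sub, Prod.snd_sub]; ring

lemma ne_zero_of_det_ne_zero_right {p q : ℤ × ℤ} (h : det p q ≠ 0) : q ≠ 0 := by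
  rintro rfl
  simp [det] at h

lemma add_self_ne_zero {p : ℤ × ℤ} (hp : p ≠ 0) : p + p ≠ 0 := by
  contrapose! hp
  rw [Prod.ext_iff] at hp ⊢
  simp only [Prod.fst_add, Prod.snd_add, Prod.fst_zero, Prod.snd_zero] at hp ⊢
  omega

/-- Two nonzero linear forms on `ℤ²` cannot both vanish on two of `(1,0)`, `(0,1)`, `(1,1)`,
so one of these three vectors does the job. -/
lemma exists_det_ne_zero_and_det_ne_zero {i m : ℤ × ℤ} (hi : i ≠ 0) (hm : m ≠ 0) :
    ∃ n, det i n ≠ 0 ∧ det n m ≠ 0 := by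
  by_contra! h
  have h₁ := h (1, 0)
  have h₂ := h (0, 1)
  have h₃ := h (1, 1)
  simp only [det, mul_one, mul_zero, sub_zero, zero_sub, one_mul, zero_mul] at h₁ h₂ h₃
  apply hi
  rw [Ne, Prod.ext_iff] at hm
  rw [Prod.ext_iff]
  simp only [Prod.fst_zero, Prod.snd_zero] at hm ⊢
  omega

section CoefficientEquation

variable {i : ℤ × ℤ} {b : ℤ × ℤ → ℂ}
  (h : ∀ m n : ℤ × ℤ, m ≠ 0 → n ≠ 0 → m + n ≠ 0 →
    2 * (det n m : ℂ) * b (m + n) = det (n + i) m * b n)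
include h

lemma eq_zero_of_det_ne_zero {n : ℤ × ℤ} (hd : det i n ≠ 0) : b n = 0 := by
  have hn := ne_zero_of_det_ne_zero_right hd
  have hnn := h n n hn hn (add_self_ne_zero hn)
  rw [det_self, det_add_left, det_self, zero_add, Int.cast_zero, mul_zero, zero_mul] at hnn
  exact (mul_eq_zero.mp hnn.symm).resolve_left (by exact_mod_cast hd)

lemma apply_eq_zero_of_ne_zero (hi : i ≠ 0) {m : ℤ × ℤ} (hm : m ≠ 0) : b m = 0 := by
  obtain ⟨n, hin, hnm⟩ := exists_det_ne_zero_and_det_ne_zero hi hm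
  have hmn : m - n ≠ 0 :=
    ne_zero_of_det_ne_zero_right (p := n) (by rwa [det_sub_right, det_self, sub_zero])
  have key := h (m - n) n hmn (ne_zero_of_det_ne_zero_right hin) (by rwa [sub_add_cancel])
  rw [sub_add_cancel, det_sub_right, det_self, sub_zero, eq_zero_of_det_ne_zero h hin,
    mul_zero] at key
  exact (mul_eq_zero.mp key).resolve_left (by exact_mod_cast mul_ne_zero two_ne_zero hnm)

end CoefficientEquation

end KantorDouble

open KantorDouble in
theorem stmt9_general (i : ℤ × ℤ) (hi1 : i.1 ≠ 0) (b : ℤ × ℤ → ℂ)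
    (h1 : ∀ m n : ℤ × ℤ, m ≠ 0 → n ≠ 0 → m + n ≠ 0 →
      2 * ((n.1 * m.2 - n.2 * m.1 : ℤ) : ℂ) * b (m + n) =
        (((n + i).1 * m.2 - (n + i).2 * m.1 : ℤ) : ℂ) * b n) :
    ∀ m : ℤ × ℤ, m ≠ 0 → b m = 0 :=
  fun _ hm => apply_eq_zero_of_ne_zero h1 (fun hi => hi1 (congrArg Prod.fst hi)) hm

/-- odd coefficient equations for degree `i = (i₁,i₂)` off the axes.
With `det(p;q) = p₁q₂ − p₂q₁`, if `b : ℤ² \ {0} → ℂ` satisfies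
`2·det(n;m)·b(m+n) = det(n+i;m)·b(n)` and `det(n+i;m)·b(n) = det(n;m+i)·b(m)`
for all nonzero `m, n` with `m+n ≠ 0`, then `b ≡ 0`. -/
theorem stmt9 (i : ℤ × ℤ) (hi1 : i.1 ≠ 0) (hi2 : i.2 ≠ 0) (b : ℤ × ℤ → ℂ)
    (h1 : ∀ m n : ℤ × ℤ, m ≠ 0 → n ≠ 0 → m + n ≠ 0 →
      2 * ((n.1 * m.2 - n.2 * m.1 : ℤ) : ℂ) * b (m + n) =
        (((n + i).1 * m.2 - (n + i).2 * m.1 : ℤ) : ℂ) * b n)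
    (h2 : ∀ m n : ℤ × ℤ, m ≠ 0 → n ≠ 0 → m + n ≠ 0 →
      (((n + i).1 * m.2 - (n + i).2 * m.1 : ℤ) : ℂ) * b n =
        ((n.1 * (m + i).2 - n.2 * (m + i).1 : ℤ) : ℂ) * b m) :
    ∀ m : ℤ × ℤ, m ≠ 0 → b m = 0 :=
  stmt9_general i hi1 b h1
end

section
/- Suppose c, d : ℤ² \ {0} → ℂ satisfy, for all nonzero m, n with m+n ≠ 0: 2·det(n;m)·c(m+n) = det(n;m)·c(m) + det(n;m)·c(n) and 2·c(m+n) = d(m) + d(n). Then c is a constant c₀ and d(m) = c₀ for all m. -/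
/-- coefficient equations for an even ½-superderivation of degree 0 on the
Kantor double of the Virasoro-like algebra. If `c, d : ℤ² \ {0} → ℂ` satisfy, for all
nonzero `m, n` with `m+n ≠ 0`,
`2·det(n;m)·c(m+n) = det(n;m)·c(m) + det(n;m)·c(n)` and `2·c(m+n) = d(m) + d(n)`,
then `c` is a constant `c₀` and `d(m) = c₀` for all `m`. -/
theorem stmt12 (c d : ℤ × ℤ → ℂ)
    (h1 : ∀ m n : ℤ × ℤ, m ≠ 0 → n ≠ 0 → m + n ≠ 0 →
      2 * ((n.1 * m.2 - n.2 * m.1 : ℤ) : ℂ) * c (m + n) =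
        ((n.1 * m.2 - n.2 * m.1 : ℤ) : ℂ) * c m + ((n.1 * m.2 - n.2 * m.1 : ℤ) : ℂ) * c n)
    (h2 : ∀ m n : ℤ × ℤ, m ≠ 0 → n ≠ 0 → m + n ≠ 0 →
      2 * c (m + n) = d m + d n) :
    ∃ c₀ : ℂ, (∀ m : ℤ × ℤ, m ≠ 0 → c m = c₀) ∧ (∀ m : ℤ × ℤ, m ≠ 0 → d m = c₀) := by
  have key : ∀ m n : ℤ × ℤ, (n.1 * m.2 - n.2 * m.1 : ℤ) ≠ 0 →
      2 * c (m + n) = c m + c n := by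
    intro m n hd
    have hm : m ≠ 0 := by rintro rfl; simp at hd
    have hn : n ≠ 0 := by rintro rfl; simp at hd
    have hmn : m + n ≠ 0 := by
      intro h
      apply hd
      have hnm : n = -m := eq_neg_of_add_eq_zero_left (by rwa [add_comm] at h)
      rw [hnm, Prod.fst_neg, Prod.snd_neg]; ring
    have H := h1 m n hm hn hmn
    have hD : ((n.1 * m.2 - n.2 * m.1 : ℤ) : ℂ) ≠ 0 := Int.cast_ne_zero.mpr hd
    apply mul_left_cancel₀ hD
    linear_combination H
  -- main lemma: 4 c n = 3 c m + c (-m) when m, n independent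
  have eqA : ∀ m n : ℤ × ℤ, (n.1 * m.2 - n.2 * m.1 : ℤ) ≠ 0 →
      4 * c n = 3 * c m + c (-m) := by
    intro m n hd
    have E1 := key m n hd
    have hd2 : (n.1 * (m + n).2 - n.2 * (m + n).1 : ℤ) ≠ 0 := by
      have : (n.1 * (m + n).2 - n.2 * (m + n).1 : ℤ) = n.1 * m.2 - n.2 * m.1 := by
        rw [Prod.fst_add, Prod.snd_add]; ring
      rw [this]; exact hd
    have E2 := key (m + n) n hd2
    rw [add_assoc] at E2
    have hd3 : ((n + n).1 * m.2 - (n + n).2 * m.1 : ℤ) ≠ 0 := by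
      have : ((n + n).1 * m.2 - (n + n).2 * m.1 : ℤ) = 2 * (n.1 * m.2 - n.2 * m.1) := by
        rw [Prod.fst_add, Prod.snd_add]; ring
      rw [this]; exact mul_ne_zero two_ne_zero hd
    have E3 := key m (n + n) hd3
    have hd4 : ((n - m).1 * (m + n).2 - (n - m).2 * (m + n).1 : ℤ) ≠ 0 := by
      have : ((n - m).1 * (m + n).2 - (n - m).2 * (m + n).1 : ℤ)
          = 2 * (n.1 * m.2 - n.2 * m.1) := by
        rw [Prod.fst_add, Prod.snd_add, Prod.fst_sub, Prod.snd_sub]; ring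
      rw [this]; exact mul_ne_zero two_ne_zero hd
    have E4 := key (m + n) (n - m) hd4
    have hpt : (m + n) + (n - m) = n + n := by ring
    rw [hpt] at E4
    have hd5 : (n.1 * (-m).2 - n.2 * (-m).1 : ℤ) ≠ 0 := by
      have : (n.1 * (-m).2 - n.2 * (-m).1 : ℤ) = -(n.1 * m.2 - n.2 * m.1) := by
        rw [Prod.fst_neg, Prod.snd_neg]; ring
      rw [this]; exact neg_ne_zero.mpr hd
    have E5 := key (-m) n hd5
    have hpt5 : -m + n = n - m := by ring
    rw [hpt5] at E5
    linear_combination (-1 : ℂ) * E1 + (-4 : ℂ) * E2 + 4 * E3 + 2 * E4 + E5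
  have indep : ∀ m n : ℤ × ℤ, (n.1 * m.2 - n.2 * m.1 : ℤ) ≠ 0 → c n = c m := by
    intro m n hd
    have H1 := eqA m n hd
    have hd' : (n.1 * (-m).2 - n.2 * (-m).1 : ℤ) ≠ 0 := by
      have : (n.1 * (-m).2 - n.2 * (-m).1 : ℤ) = -(n.1 * m.2 - n.2 * m.1) := by
        rw [Prod.fst_neg, Prod.snd_neg]; ring
      rw [this]; exact neg_ne_zero.mpr hd
    have H2 := eqA (-m) n hd'
    rw [neg_neg] at H2
    linear_combination (3 / 8 : ℂ) * H1 + (-1 / 8 : ℂ) * H2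
  have hconst : ∀ m : ℤ × ℤ, m ≠ 0 → c m = c (1, 0) := by
    intro m hm
    by_cases h2' : m.2 ≠ 0
    · have hd : ((1, 0).1 * m.2 - (1, 0).2 * m.1 : ℤ) ≠ 0 := by simpa using h2'
      exact (indep m (1, 0) hd).symm
    · push_neg at h2'
      have h1' : m.1 ≠ 0 := by
        intro h
        exact hm (Prod.ext h h2')
      have hd : ((0, 1).1 * m.2 - (0, 1).2 * m.1 : ℤ) ≠ 0 := by simpa using h1'
      have e1 : c (0, 1) = c m := indep m (0, 1) hd
      have hd2 : (((1, 0) : ℤ × ℤ).1 * ((0, 1) : ℤ × ℤ).2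
          - ((1, 0) : ℤ × ℤ).2 * ((0, 1) : ℤ × ℤ).1 : ℤ) ≠ 0 := by norm_num
      have e2 : c (1, 0) = c (0, 1) := indep (0, 1) (1, 0) hd2
      rw [← e1, ← e2]
  refine ⟨c (1, 0), hconst, ?_⟩
  intro m hm
  have hmm : m + m ≠ 0 := by
    intro h
    apply hm
    have hs : (2 : ℤ) • m = 0 := by rw [two_smul]; exact h
    rcases smul_eq_zero.mp hs with h' | h'
    · norm_num at h'
    · exact h'
  have H := h2 m m hm hm hmm
  have := hconst (m + m) hmm
  rw [this] at H
  linear_combination (-1 / 2 : ℂ) * H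
end

section
/- If b : ℤ² \ {0} → ℂ and a ∈ ℂ satisfy det(n;m)·(2b(m+n) − b(n)) = a and det(n;m)·(b(m) − b(n)) = 2a for all nonzero m, n ∈ ℤ² with m+n ≠ 0 (det(n;m) = n₁m₂ − n₂m₁), then a = 0 and b ≡ 0. -/
/-- if `b : ℤ² \ {0} → ℂ` and `a ∈ ℂ` satisfy
`det(n;m)·(2b(m+n) − b(n)) = a` and `det(n;m)·(b(m) − b(n)) = 2a`
for all nonzero `m, n` with `m+n ≠ 0`, then `a = 0` and `b ≡ 0`. -/
theorem stmt15 (b : ℤ × ℤ → ℂ) (a : ℂ)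
    (h1 : ∀ m n : ℤ × ℤ, m ≠ 0 → n ≠ 0 → m + n ≠ 0 →
      ((n.1 * m.2 - n.2 * m.1 : ℤ) : ℂ) * (2 * b (m + n) - b n) = a)
    (h2 : ∀ m n : ℤ × ℤ, m ≠ 0 → n ≠ 0 → m + n ≠ 0 →
      ((n.1 * m.2 - n.2 * m.1 : ℤ) : ℂ) * (b m - b n) = 2 * a) :
    a = 0 ∧ ∀ m : ℤ × ℤ, m ≠ 0 → b m = 0 := by
  have hA : a = 0 := by
    have e1 := h2 ((1 : ℤ), (0 : ℤ)) ((1 : ℤ), (1 : ℤ)) (by decide) (by decide) (by decide)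
    have e2 := h2 ((1 : ℤ), (1 : ℤ)) ((0 : ℤ), (1 : ℤ)) (by decide) (by decide) (by decide)
    have e3 := h2 ((1 : ℤ), (0 : ℤ)) ((0 : ℤ), (1 : ℤ)) (by decide) (by decide) (by decide)
    push_cast at e1 e2 e3
    linear_combination -(e1 + e2 - e3) / 2
  refine ⟨hA, ?_⟩
  intro m hm
  have hm' : m.1 ≠ 0 ∨ m.2 ≠ 0 := by
    by_contra h
    push_neg at h
    exact hm (Prod.ext h.1 h.2)
  set n : ℤ × ℤ := (-m.2, m.1) with hn
  have hn0 : n ≠ 0 := by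
    simp only [hn, Prod.ext_iff, Prod.fst_zero, Prod.snd_zero, ne_eq, not_and_or]
    omega
  have hmn : m + n ≠ 0 := by
    simp only [hn, Prod.ext_iff, Prod.fst_add, Prod.snd_add, Prod.fst_zero, Prod.snd_zero,
      ne_eq, not_and_or]
    omega
  have h2mn : m + (m + n) ≠ 0 := by
    simp only [hn, Prod.ext_iff, Prod.fst_add, Prod.snd_add, Prod.fst_zero, Prod.snd_zero,
      ne_eq, not_and_or]
    omega
  have hdZ : (n.1 * m.2 - n.2 * m.1 : ℤ) ≠ 0 := by
    simp only [hn]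
    rcases hm' with h | h
    · nlinarith [mul_self_pos.mpr h, mul_self_nonneg m.2]
    · nlinarith [mul_self_pos.mpr h, mul_self_nonneg m.1]
  have hd : ((n.1 * m.2 - n.2 * m.1 : ℤ) : ℂ) ≠ 0 := by
    exact_mod_cast Int.cast_ne_zero.mpr hdZ
  have hd2Z : ((m + n).1 * m.2 - (m + n).2 * m.1 : ℤ) ≠ 0 := by
    simp only [hn, Prod.fst_add, Prod.snd_add]
    rcases hm' with h | h
    · nlinarith [mul_self_pos.mpr h, mul_self_nonneg m.2]
    · nlinarith [mul_self_pos.mpr h, mul_self_nonneg m.1]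
  have hd2 : (((m + n).1 * m.2 - (m + n).2 * m.1 : ℤ) : ℂ) ≠ 0 := by
    exact_mod_cast Int.cast_ne_zero.mpr hd2Z
  have E1 := h2 m n hm hn0 hmn
  have E2 := h1 m n hm hn0 hmn
  have E3 := h2 m (m + n) hm hmn h2mn
  rw [hA] at E1 E2 E3
  have e1 : b m - b n = 0 := by
    rcases mul_eq_zero.mp (show ((n.1 * m.2 - n.2 * m.1 : ℤ) : ℂ) * (b m - b n) = 0 by
      linear_combination E1) with h | h
    · exact absurd h hd
    · exact h
  have e2 : 2 * b (m + n) - b n = 0 := by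
    rcases mul_eq_zero.mp (show ((n.1 * m.2 - n.2 * m.1 : ℤ) : ℂ) * (2 * b (m + n) - b n) = 0 by
      linear_combination E2) with h | h
    · exact absurd h hd
    · exact h
  have e3 : b m - b (m + n) = 0 := by
    rcases mul_eq_zero.mp (show (((m + n).1 * m.2 - (m + n).2 * m.1 : ℤ) : ℂ) * (b m - b (m + n)) = 0 by
      linear_combination E3) with h | h
    · exact absurd h hd2
    · exact h
  linear_combination 2 * e3 + e2 - e1
end

section
/- Fix i = (i₁,i₂) with i₁, i₂ ≠ 0. If b : ℤ² \ {0} → ℂ satisfies 4·det(n;m)·b(m+n) = det(n; m+i)·b(m) + det(n+i; m)·b(n) for all nonzero m, n with m+n ≠ 0 (det(p;q) = p₁q₂ − p₂q₁), then b(m₁,0) = m₁·b(e₁) for m₁ ∈ ℤ*, b(0,m₂) = m₂·b(e₂) for m₂ ∈ ℤ*, and 4·b(m₁,n₂) = (m₁+i₁)·b(e₁) + (n₂+i₂)·b(e₂) for all m₁, n₂ ∈ ℤ*; consequently b ≡ 0. -/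
/-- averaged coefficient equation, `i = (i₁,i₂)` off the axes.
If `b : ℤ² \ {0} → ℂ` satisfies
`4·det(n;m)·b(m+n) = det(n;m+i)·b(m) + det(n+i;m)·b(n)` for all nonzero `m, n` with
`m+n ≠ 0` (`det(p;q) = p₁q₂ − p₂q₁`), then `b(m₁,0) = m₁·b(e₁)` for `m₁ ≠ 0`,
`b(0,m₂) = m₂·b(e₂)` for `m₂ ≠ 0`, `4·b(m₁,n₂) = (m₁+i₁)·b(e₁) + (n₂+i₂)·b(e₂)` for
`m₁, n₂ ≠ 0`; consequently `b ≡ 0`. -/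
theorem stmt19 (i : ℤ × ℤ) (hi1 : i.1 ≠ 0) (hi2 : i.2 ≠ 0) (b : ℤ × ℤ → ℂ)
    (h : ∀ m n : ℤ × ℤ, m ≠ 0 → n ≠ 0 → m + n ≠ 0 →
      4 * ((n.1 * m.2 - n.2 * m.1 : ℤ) : ℂ) * b (m + n) =
        ((n.1 * (m + i).2 - n.2 * (m + i).1 : ℤ) : ℂ) * b m +
        (((n + i).1 * m.2 - (n + i).2 * m.1 : ℤ) : ℂ) * b n) :
    (∀ m₁ : ℤ, m₁ ≠ 0 → b (m₁, 0) = (m₁ : ℂ) * b (1, 0)) ∧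
    (∀ m₂ : ℤ, m₂ ≠ 0 → b (0, m₂) = (m₂ : ℂ) * b (0, 1)) ∧
    (∀ m₁ n₂ : ℤ, m₁ ≠ 0 → n₂ ≠ 0 →
      4 * b (m₁, n₂) = ((m₁ + i.1 : ℤ) : ℂ) * b (1, 0) + ((n₂ + i.2 : ℤ) : ℂ) * b (0, 1)) ∧
    (∀ m : ℤ × ℤ, m ≠ 0 → b m = 0) := by
  obtain ⟨i1, i2⟩ := i
  simp only at hi1 hi2 h ⊢
  have hi1' : (i1 : ℂ) ≠ 0 := Int.cast_ne_zero.mpr hi1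
  have hi2' : (i2 : ℂ) ≠ 0 := Int.cast_ne_zero.mpr hi2
  have key1 : ∀ m₁ n₁ : ℤ, m₁ ≠ 0 → n₁ ≠ 0 → m₁ + n₁ ≠ 0 →
      (n₁ : ℂ) * b (m₁, 0) = (m₁ : ℂ) * b (n₁, 0) := by
    intro m₁ n₁ hm hn hmn
    have H := h (m₁, 0) (n₁, 0) (by simp [Prod.ext_iff, hm]) (by simp [Prod.ext_iff, hn])
      (by simp [Prod.ext_iff, hmn])
    simp only [Prod.mk_add_mk, add_zero, zero_add] at H
    push_cast at H
    have : (i2 : ℂ) * ((n₁ : ℂ) * b (m₁, 0)) = (i2 : ℂ) * ((m₁ : ℂ) * b (n₁, 0)) := by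
      linear_combination -H
    exact mul_left_cancel₀ hi2' this
  have key2 : ∀ m₂ n₂ : ℤ, m₂ ≠ 0 → n₂ ≠ 0 → m₂ + n₂ ≠ 0 →
      (n₂ : ℂ) * b (0, m₂) = (m₂ : ℂ) * b (0, n₂) := by
    intro m₂ n₂ hm hn hmn
    have H := h (0, m₂) (0, n₂) (by simp [Prod.ext_iff, hm]) (by simp [Prod.ext_iff, hn])
      (by simp [Prod.ext_iff, hmn])
    simp only [Prod.mk_add_mk, add_zero, zero_add] at H
    push_cast at H
    have : (i1 : ℂ) * ((n₂ : ℂ) * b (0, m₂)) = (i1 : ℂ) * ((m₂ : ℂ) * b (0, n₂)) := by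
      linear_combination H
    exact mul_left_cancel₀ hi1' this
  have p1 : ∀ m₁ : ℤ, m₁ ≠ 0 → b (m₁, 0) = (m₁ : ℂ) * b (1, 0) := by
    intro m₁ hm
    rcases eq_or_ne m₁ (-1) with rfl | hm1
    · have h2 : b (2, 0) = 2 * b (1, 0) := by
        have := key1 2 1 two_ne_zero one_ne_zero (by norm_num)
        push_cast at this; linear_combination this
      have := key1 (-1) 2 (by norm_num) two_ne_zero (by norm_num)
      push_cast at this ⊢
      linear_combination this / 2 - h2 / 2
    · have := key1 m₁ 1 hm one_ne_zero (by omega)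
      push_cast at this
      linear_combination this
  have p2 : ∀ m₂ : ℤ, m₂ ≠ 0 → b (0, m₂) = (m₂ : ℂ) * b (0, 1) := by
    intro m₂ hm
    rcases eq_or_ne m₂ (-1) with rfl | hm1
    · have h2 : b (0, 2) = 2 * b (0, 1) := by
        have := key2 2 1 two_ne_zero one_ne_zero (by norm_num)
        push_cast at this; linear_combination this
      have := key2 (-1) 2 (by norm_num) two_ne_zero (by norm_num)
      push_cast at this ⊢
      linear_combination this / 2 - h2 / 2
    · have := key2 m₂ 1 hm one_ne_zero (by omega)
      push_cast at this
      linear_combination this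
  have p3 : ∀ m₁ n₂ : ℤ, m₁ ≠ 0 → n₂ ≠ 0 →
      4 * b (m₁, n₂) = ((m₁ + i1 : ℤ) : ℂ) * b (1, 0) + ((n₂ + i2 : ℤ) : ℂ) * b (0, 1) := by
    intro m₁ n₂ hm hn
    have H := h (m₁, 0) (0, n₂) (by simp [Prod.ext_iff, hm]) (by simp [Prod.ext_iff, hn])
      (by simp [Prod.ext_iff, hm])
    simp only [Prod.mk_add_mk, add_zero, zero_add] at H
    push_cast at H
    have hm' : (m₁ : ℂ) ≠ 0 := Int.cast_ne_zero.mpr hm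
    have hn' : (n₂ : ℂ) ≠ 0 := Int.cast_ne_zero.mpr hn
    have hc : (m₁ : ℂ) * (n₂ : ℂ) ≠ 0 := mul_ne_zero hm' hn'
    have key : (m₁ : ℂ) * (n₂ : ℂ) *
        (4 * b (m₁, n₂)) = (m₁ : ℂ) * (n₂ : ℂ) *
        (((m₁ : ℂ) + i1) * b (1, 0) + ((n₂ : ℂ) + i2) * b (0, 1)) := by
      linear_combination -H + ((n₂ : ℂ) * ((m₁ : ℂ) + i1)) * p1 m₁ hm
        + ((m₁ : ℂ) * ((n₂ : ℂ) + i2)) * p2 n₂ hn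
    have := mul_left_cancel₀ hc key
    push_cast
    linear_combination this
  refine ⟨p1, p2, p3, ?_⟩
  have HA1 := h (1, 1) (1, -1) (by simp [Prod.ext_iff]) (by simp [Prod.ext_iff])
    (by simp [Prod.ext_iff])
  have HA2 := h (-1, -1) (-1, 1) (by simp [Prod.ext_iff]) (by simp [Prod.ext_iff])
    (by simp [Prod.ext_iff])
  simp only [Prod.mk_add_mk] at HA1 HA2
  norm_num at HA1 HA2
  have q11 := p3 1 1 one_ne_zero one_ne_zero
  have q1m1 := p3 1 (-1) one_ne_zero (by norm_num)
  have qm11 := p3 (-1) 1 (by norm_num) one_ne_zero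
  have qm1m1 := p3 (-1) (-1) (by norm_num) (by norm_num)
  have r2 := p1 2 two_ne_zero
  have rm2 := p1 (-2) (by norm_num)
  norm_num at q11 q1m1 qm11 qm1m1 r2 rm2
  have eqI : (64 - 2*(1+(i1:ℂ))*(2+(i1:ℂ))) * b (1, 0) = 2*(i2:ℂ)*(3+(i1:ℂ)) * b (0, 1) := by
    linear_combination 4*HA1 + (2+(i1:ℂ)+(i2:ℂ))*q11 + (2+(i1:ℂ)-(i2:ℂ))*q1m1 - 32*r2
  have eqIII : (-64 + 2*((i1:ℂ)-1)*((i1:ℂ)-2)) * b (1, 0) = 2*(i2:ℂ)*(3-(i1:ℂ)) * b (0, 1) := by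
    linear_combination 4*HA2 + (2-(i1:ℂ)-(i2:ℂ))*qm1m1 + (2-(i1:ℂ)+(i2:ℂ))*qm11 - 32*rm2
  have hA : b (1, 0) = 0 := by
    linear_combination ((3 - (i1:ℂ))/360) * eqI + ((-3 - (i1:ℂ))/360) * eqIII
  have hB : b (0, 1) = 0 := by
    have hsum : (i2:ℂ) * b (0, 1) = 0 := by
      linear_combination (-1/12 : ℂ) * eqI + (-1/12 : ℂ) * eqIII - (i1:ℂ) * hA
    exact (mul_eq_zero.mp hsum).resolve_left hi2'
  intro m hm
  obtain ⟨m1, m2⟩ := m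
  rcases eq_or_ne m1 0 with rfl | hm1
  · have hm2 : m2 ≠ 0 := by simpa [Prod.ext_iff] using hm
    rw [p2 m2 hm2, hB, mul_zero]
  · rcases eq_or_ne m2 0 with rfl | hm2
    · rw [p1 m1 hm1, hA, mul_zero]
    · have h0 := p3 m1 m2 hm1 hm2
      rw [hA, hB, mul_zero, mul_zero, add_zero] at h0
      exact (mul_eq_zero.mp h0).resolve_left (by norm_num)
end
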